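/- arXiv:1104.1303 — 5 statements merged into one kernel-verified Lean document; each statement's English description precedes it below -/
import Mathlib

section
/- If α: ℝ → ℝ≥0 is a convex, even (symmetric) C¹ function with α(0)=α'(0)=0 whose derivative α' is concave on [0,∞), then for all u,v ∈ ℝ: α(u+v) ≤ α(u) + v·α'(u) + 4·α(v/2). -/
/-!
Write `g = α'`. Since `α` is even, `g` is odd, so `g 0 = 0`, and a concave function on `[0, ∞)`
vanishing at `0` is subadditive there and satisfies `g s ≤ 2 g (s/2)`. Splitting according to the
signs of `u` and `u + s`, oddness transfers this to `g (u + s) ≤ g u + 2 g (s/2)` for all `u` and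
`s ≥ 0`. Integrating in `s` over `[0, v]` gives the inequality for `v ≥ 0`, and evenness of `α`
reduces `v < 0` to that case.
-/

open Set

theorem Function.Even.deriv_odd {f : ℝ → ℝ} (hf : f.Even) : (deriv f).Odd := fun x => by
  simpa [funext hf] using deriv_comp_neg f (-x)

namespace ConcaveOn

variable {g : ℝ → ℝ}

theorem mul_le_map_mul_of_map_zero (hg : ConcaveOn ℝ (Ici 0) g) (h0 : g 0 = 0) {x t : ℝ}
    (hx : 0 ≤ x) (ht₀ : 0 ≤ t) (ht₁ : t ≤ 1) : t * g x ≤ g (t * x) := by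
  simpa [h0] using hg.2 (mem_Ici.2 hx) (mem_Ici.2 le_rfl) ht₀ (sub_nonneg.2 ht₁)
    (add_sub_cancel t 1)

theorem map_add_le_of_map_zero (hg : ConcaveOn ℝ (Ici 0) g) (h0 : g 0 = 0) {a b : ℝ}
    (ha : 0 ≤ a) (hb : 0 ≤ b) : g (a + b) ≤ g a + g b := by
  rcases (add_nonneg ha hb).eq_or_lt with hab | hab
  · obtain ⟨rfl, rfl⟩ : a = 0 ∧ b = 0 := ⟨by linarith, by linarith⟩
    simp [h0]
  have hle (c : ℝ) (hc : 0 ≤ c) (hca : c ≤ a + b) : c / (a + b) * g (a + b) ≤ g c := by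
    simpa [div_mul_cancel₀ c hab.ne'] using
      hg.mul_le_map_mul_of_map_zero h0 hab.le (div_nonneg hc hab.le) ((div_le_one hab).2 hca)
  have hsum : a / (a + b) * g (a + b) + b / (a + b) * g (a + b) = g (a + b) := by
    field_simp
  linarith [hle a ha (by linarith), hle b hb (by linarith)]

theorem add_le_two_mul_map_midpoint (hg : ConcaveOn ℝ (Ici 0) g) {a b : ℝ} (ha : 0 ≤ a)
    (hb : 0 ≤ b) : g a + g b ≤ 2 * g ((a + b) / 2) := by
  have h := hg.2 (mem_Ici.2 ha) (mem_Ici.2 hb) (by norm_num : (0 : ℝ) ≤ 1 / 2)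
    (by norm_num : (0 : ℝ) ≤ 1 / 2) (by norm_num)
  simp only [smul_eq_mul] at h
  rw [show 1 / 2 * a + 1 / 2 * b = (a + b) / 2 by ring] at h
  linarith

theorem map_add_le_of_odd (hg : ConcaveOn ℝ (Ici 0) g) (hodd : g.Odd) (u : ℝ) {s : ℝ}
    (hs : 0 ≤ s) : g (u + s) ≤ g u + 2 * g (s / 2) := by
  have h0 : g 0 = 0 := hodd.map_zero
  have hhalf : g s ≤ 2 * g (s / 2) := by
    have := hg.mul_le_map_mul_of_map_zero h0 hs (by norm_num : (0 : ℝ) ≤ 1 / 2) (by norm_num)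
    rw [show 1 / 2 * s = s / 2 by ring] at this
    linarith
  rcases le_or_gt 0 u with hu | hu
  · linarith [hg.map_add_le_of_map_zero h0 hu hs]
  rcases le_or_gt 0 (u + s) with hus | hus
  · have h := hg.add_le_two_mul_map_midpoint hus (neg_nonneg.2 hu.le)
    rw [hodd, show (u + s + -u) / 2 = s / 2 by ring] at h
    linarith
  · have h := hg.map_add_le_of_map_zero h0 hs (neg_nonneg.2 hus.le)
    rw [show s + -(u + s) = -u by ring, hodd, hodd] at h
    linarith

end ConcaveOn

theorem sub_map_zero_le_of_deriv_le {F G : ℝ → ℝ} (hF : Differentiable ℝ F)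
    (hG : Differentiable ℝ G) (hle : ∀ s, 0 < s → deriv F s ≤ deriv G s) {v : ℝ}
    (hv : 0 ≤ v) : F v - F 0 ≤ G v - G 0 := by
  have hmono : MonotoneOn (G - F) (Ici 0) := by
    refine monotoneOn_of_deriv_nonneg (convex_Ici 0) (hG.sub hF).continuous.continuousOn
      (hG.sub hF).differentiableOn fun s hs => ?_
    rw [interior_Ici] at hs
    rw [deriv_sub (hG s) (hF s)]
    linarith [hle s hs]
  have := hmono self_mem_Ici (mem_Ici.2 hv) hv
  simp only [Pi.sub_apply] at this
  linarith

theorem add_le_add_mul_deriv_add_of_nonneg {f : ℝ → ℝ} (hf : Differentiable ℝ f)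
    (h0 : f 0 = 0) (hodd : (deriv f).Odd) (hconc : ConcaveOn ℝ (Ici 0) (deriv f)) (u : ℝ)
    {v : ℝ} (hv : 0 ≤ v) : f (u + v) ≤ f u + v * deriv f u + 4 * f (v / 2) := by
  have hF (s : ℝ) :
      HasDerivAt (fun s => f (u + s) - s * deriv f u) (deriv f (u + s) - deriv f u) s :=
    ((hf (u + s)).hasDerivAt.comp_const_add u s).sub
      (by simpa using (hasDerivAt_id s).mul_const (deriv f u))
  have hG (s : ℝ) : HasDerivAt (fun s => 4 * f (s / 2)) (2 * deriv f (s / 2)) s :=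
    (((hf (s / 2)).hasDerivAt.comp s ((hasDerivAt_id' s).div_const 2)).const_mul 4).congr_deriv
      (by ring)
  have h := sub_map_zero_le_of_deriv_le (fun s => (hF s).differentiableAt)
    (fun s => (hG s).differentiableAt) (fun s hs => by
      rw [(hF s).deriv, (hG s).deriv]
      linarith [hconc.map_add_le_of_odd hodd u hs.le]) hv
  simp only [add_zero, zero_mul, sub_zero, zero_div, h0, mul_zero] at h
  linarith

theorem alpha_ineq_general (α : ℝ → ℝ) (heven : ∀ t, α (-t) = α t)
    (hC1 : ContDiff ℝ 1 α) (h0 : α 0 = 0)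
    (hconc : ConcaveOn ℝ (Set.Ici 0) (deriv α)) :
    ∀ u v : ℝ, α (u + v) ≤ α u + v * deriv α u + 4 * α (v / 2) := by
  have hdiff : Differentiable ℝ α := hC1.differentiable one_ne_zero
  have hodd : (deriv α).Odd := Function.Even.deriv_odd heven
  intro u v
  rcases le_total 0 v with hv | hv
  · exact add_le_add_mul_deriv_add_of_nonneg hdiff h0 hodd hconc u hv
  · have h := add_le_add_mul_deriv_add_of_nonneg hdiff h0 hodd hconc (-u) (neg_nonneg.2 hv)
    rwa [← neg_add, heven, hodd, neg_mul_neg, neg_div, heven, heven] at h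

/-- Lemma 5.2: for `α` convex, even, `C¹`, with `α(0)=α'(0)=0` and `α'` concave on
`[0,∞)`, one has `α(u+v) ≤ α(u) + v α'(u) + 4 α(v/2)` for all reals `u, v`. -/
theorem alpha_ineq (α : ℝ → ℝ) (hnn : ∀ t, 0 ≤ α t)
    (hconv : ConvexOn ℝ Set.univ α) (heven : ∀ t, α (-t) = α t)
    (hC1 : ContDiff ℝ 1 α) (h0 : α 0 = 0) (h0' : deriv α 0 = 0)
    (hconc : ConcaveOn ℝ (Set.Ici 0) (deriv α)) :
    ∀ u v : ℝ, α (u + v) ≤ α u + v * deriv α u + 4 * α (v / 2) :=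
  alpha_ineq_general α heven hC1 h0 hconc
end

section
/- Let α: ℝ → ℝ≥0 be a convex, even C¹ function with α(0)=α'(0)=0 and α' concave on [0,∞). Then for any u ∈ (0,1) and any x ∈ ℝ, one has α(x/u) ≤ α(x)/u². -/
/-!
Put `c = 1/u ≥ 1`. Concavity of `α'` on `[0, ∞)` together with `α'(0) = 0` gives
`α'(c t) ≤ c α'(t)` for `t ≥ 0`, so `x ↦ c² α(x) - α(c x)` has nonnegative derivative on
`[0, ∞)` and vanishes at `0`; hence `α(c x) ≤ c² α(x)` for `x ≥ 0`, and for `x < 0` by evenness.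
-/

open Set

theorem ConcaveOn.map_mul_le_mul_of_one_le {g : ℝ → ℝ} (hg : ConcaveOn ℝ (Ici 0) g)
    (hg0 : g 0 = 0) {c t : ℝ} (hc : 1 ≤ c) (ht : 0 ≤ t) : g (c * t) ≤ c * g t := by
  have hc0 : 0 < c := one_pos.trans_le hc
  -- `t` is the convex combination `c⁻¹ • (c t) + (1 - c⁻¹) • 0`
  have h := hg.2 (mem_Ici.2 (mul_nonneg hc0.le ht)) (self_mem_Ici (a := (0 : ℝ)))
    (inv_nonneg.2 hc0.le) (sub_nonneg.2 (inv_le_one_of_one_le₀ hc)) (add_sub_cancel _ _)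
  simp only [smul_eq_mul, mul_zero, add_zero, hg0, inv_mul_cancel_left₀ hc0.ne'] at h
  calc g (c * t) = c * (c⁻¹ * g (c * t)) := (mul_inv_cancel_left₀ hc0.ne' _).symm
    _ ≤ c * g t := by gcongr

theorem le_sq_mul_of_deriv_mul_le {f : ℝ → ℝ} (hf : Differentiable ℝ f) (hf0 : f 0 = 0)
    {c : ℝ} (hc : 0 ≤ c) (hf' : ∀ t, 0 ≤ t → deriv f (c * t) ≤ c * deriv f t)
    {x : ℝ} (hx : 0 ≤ x) : f (c * x) ≤ c ^ 2 * f x := by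
  set gap : ℝ → ℝ := fun y ↦ c ^ 2 * f y - f (c * y)
  have hderiv : ∀ y, HasDerivAt gap (c * (c * deriv f y - deriv f (c * y))) y := fun y ↦
    (((hf y).hasDerivAt.const_mul (c ^ 2)).sub
      ((hf (c * y)).hasDerivAt.comp y ((hasDerivAt_id y).const_mul c))).congr_deriv (by ring)
  have hmono : MonotoneOn gap (Ici 0) :=
    monotoneOn_of_hasDerivWithinAt_nonneg (convex_Ici 0)
      (fun y _ ↦ (hderiv y).continuousAt.continuousWithinAt)
      (fun y _ ↦ (hderiv y).hasDerivWithinAt)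
      (fun y hy ↦ by
        rw [interior_Ici] at hy
        exact mul_nonneg hc (sub_nonneg.2 (hf' y hy.le)))
  have hgap := hmono self_mem_Ici hx hx
  simp only [gap, mul_zero, hf0, sub_zero] at hgap
  linarith

theorem alpha_scaling_general (α : ℝ → ℝ) (heven : ∀ t, α (-t) = α t)
    (hC1 : ContDiff ℝ 1 α) (h0 : α 0 = 0) (h0' : deriv α 0 = 0)
    (hconc : ConcaveOn ℝ (Set.Ici 0) (deriv α)) :
    ∀ u ∈ Set.Ioo (0 : ℝ) 1, ∀ x : ℝ, α (x / u) ≤ α x / u ^ 2 := by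
  rintro u ⟨hu0, hu1⟩ x
  have hc : 1 ≤ u⁻¹ := one_le_inv₀ hu0 |>.2 hu1.le
  have hscale : ∀ y, 0 ≤ y → α (u⁻¹ * y) ≤ u⁻¹ ^ 2 * α y :=
    fun y hy ↦ le_sq_mul_of_deriv_mul_le (hC1.differentiable one_ne_zero) h0
      (zero_le_one.trans hc) (fun t ht ↦ hconc.map_mul_le_mul_of_one_le h0' hc ht) hy
  rw [div_eq_mul_inv, div_eq_mul_inv, mul_comm x, mul_comm (α x), ← inv_pow]
  rcases le_total 0 x with hx | hx
  · exact hscale x hx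
  · simpa only [mul_neg, heven] using hscale (-x) (neg_nonneg.2 hx)

/-- Lemma 5.4 (i): for `α` convex, even, `C¹`, with `α(0)=α'(0)=0` and `α'`
concave on `[0,∞)`, for any `u ∈ (0,1)` and any real `x`, `α(x/u) ≤ α(x)/u²`. -/
theorem alpha_scaling (α : ℝ → ℝ) (hnn : ∀ t, 0 ≤ α t)
    (hconv : ConvexOn ℝ Set.univ α) (heven : ∀ t, α (-t) = α t)
    (hC1 : ContDiff ℝ 1 α) (h0 : α 0 = 0) (h0' : deriv α 0 = 0)
    (hconc : ConcaveOn ℝ (Set.Ici 0) (deriv α)) :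
    ∀ u ∈ Set.Ioo (0 : ℝ) 1, ∀ x : ℝ, α (x / u) ≤ α x / u ^ 2 :=
  alpha_scaling_general α heven hC1 h0 h0' hconc
end

section
/- Let α: ℝ → ℝ≥0 be a convex, even C¹ function with α(0)=α'(0)=0, α' concave on [0,∞), and α(t) ≠ 0 for t ≠ 0. Define ω_α(x) = sup_{u>0} α(ux)/α(u). Then for any u ∈ (0,1), ω_α(1/u) ≤ 1/u². -/
open Real Set

/-! A concave function `g` on `[0, ∞)` with `g 0 ≥ 0` satisfies `g (c t) ≤ c g(t)` for `c ≥ 1`.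
Applied to `g = α'`, this makes `v ↦ c² α(v) - α(c v)` nondecreasing on `[0, ∞)`; as it vanishes
at `0`, `α(c v) ≤ c² α(v)`; take `c = 1 / u`. -/

theorem ConcaveOn.apply_mul_le_mul_apply {g : ℝ → ℝ} (hg : ConcaveOn ℝ (Ici 0) g)
    (hg0 : 0 ≤ g 0) {c t : ℝ} (hc : 1 ≤ c) (ht : 0 ≤ t) : g (c * t) ≤ c * g t := by
  have hc0 : 0 < c := one_pos.trans_le hc
  have hw : 0 ≤ 1 - c⁻¹ := sub_nonneg.2 (inv_le_one_of_one_le₀ hc)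
  have hcomb := hg.2 (mem_Ici.2 (mul_nonneg hc0.le ht)) (mem_Ici.2 le_rfl)
    (inv_nonneg.2 hc0.le) hw (add_sub_cancel _ _)
  simp only [smul_eq_mul, mul_zero, add_zero, inv_mul_cancel_left₀ hc0.ne'] at hcomb
  rw [← inv_mul_le_iff₀ hc0]
  nlinarith

theorem apply_mul_le_sq_mul_apply {f : ℝ → ℝ} (hf : Differentiable ℝ f) (hf0 : f 0 = 0)
    (hconc : ConcaveOn ℝ (Ici 0) (deriv f)) (hf0' : 0 ≤ deriv f 0) {c v : ℝ} (hc : 1 ≤ c)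
    (hv : 0 ≤ v) : f (c * v) ≤ c ^ 2 * f v := by
  have hdiff : Differentiable ℝ fun x ↦ c ^ 2 * f x - f (c * x) := by fun_prop
  have hmono : MonotoneOn (fun x ↦ c ^ 2 * f x - f (c * x)) (Ici 0) := by
    refine monotoneOn_of_deriv_nonneg (convex_Ici 0) hdiff.continuous.continuousOn
      hdiff.differentiableOn fun x hx ↦ ?_
    have hderiv : HasDerivAt (fun x ↦ c ^ 2 * f x - f (c * x))
        (c ^ 2 * deriv f x - deriv f (c * x) * (c * 1)) x :=
      ((hf x).hasDerivAt.const_mul _).sub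
        ((hf (c * x)).hasDerivAt.comp x ((hasDerivAt_id x).const_mul c))
    have hle := hconc.apply_mul_le_mul_apply hf0' hc (interior_subset hx)
    rw [hderiv.deriv]
    nlinarith
  have := hmono (mem_Ici.2 le_rfl) (mem_Ici.2 hv) hv
  simp only [mul_zero, hf0, sub_zero] at this
  linarith

theorem omega_alpha_bound_general (α : ℝ → ℝ) (hnn : ∀ t, 0 ≤ α t)
    (hC1 : ContDiff ℝ 1 α) (h0 : α 0 = 0) (h0' : deriv α 0 = 0)
    (hconc : ConcaveOn ℝ (Set.Ici 0) (deriv α))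
    (hpos : ∀ t : ℝ, t ≠ 0 → α t ≠ 0) :
    ∀ u ∈ Set.Ioo (0 : ℝ) 1,
      (⨆ v : {v : ℝ // 0 < v}, α ((v : ℝ) * (1 / u)) / α (v : ℝ)) ≤ 1 / u ^ 2 := by
  rintro u ⟨hu0, hu1⟩
  have hc : 1 ≤ 1 / u := by rw [le_div_iff₀ hu0]; linarith
  refine ciSup_le fun ⟨v, hv⟩ ↦ ?_
  have hαv : 0 < α v := (hnn v).lt_of_ne (hpos v hv.ne').symm
  rw [div_le_iff₀ hαv, mul_comm, ← one_div_pow]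
  exact apply_mul_le_sq_mul_apply (hC1.differentiable one_ne_zero) h0 hconc h0'.ge hc hv.le

/-- Lemma 5.4 (ii): with `ω_α(x) = sup_{v>0} α(vx)/α(v)`, for any `u ∈ (0,1)`
one has `ω_α(1/u) ≤ 1/u²`. -/
theorem omega_alpha_bound (α : ℝ → ℝ) (hnn : ∀ t, 0 ≤ α t)
    (hconv : ConvexOn ℝ Set.univ α) (heven : ∀ t, α (-t) = α t)
    (hC1 : ContDiff ℝ 1 α) (h0 : α 0 = 0) (h0' : deriv α 0 = 0)
    (hconc : ConcaveOn ℝ (Set.Ici 0) (deriv α))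
    (hpos : ∀ t : ℝ, t ≠ 0 → α t ≠ 0) :
    ∀ u ∈ Set.Ioo (0 : ℝ) 1,
      (⨆ v : {v : ℝ // 0 < v}, α ((v : ℝ) * (1 / u)) / α (v : ℝ)) ≤ 1 / u ^ 2 :=
  omega_alpha_bound_general α hnn hC1 h0 h0' hconc hpos
end

section
/- Let α: ℝ → ℝ≥0 be a convex, even C¹ function with α(0)=α'(0)=0, α' concave on [0,∞). Let α* be its Legendre transform, α*(h) = sup_t (ht - α(t)), and define ω_{α*}(x) = sup_{u>0} α*(ux)/α*(u). Then for any u ∈ (0,1), ω_{α*}(u) ≤ u². -/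
/-!
If `α'` is concave on `[0, ∞)` with `α'(0) = 0`, then `α'(ut) ≥ u α'(t)` for `u ∈ [0, 1]`, so
`t ↦ α(ut) - u² α(t)` is nondecreasing on `[0, ∞)` and vanishes at `0`; by evenness
`u² α(s) ≤ α(us)` for all `s`. Substituting `t = us` in the supremum defining `α*(vu)` turns
this into `α*(vu) ≤ u² α*(v)`, and `α* ≥ -α(0) = 0` makes the quotient bound harmless where
`α*(v) = 0`.
-/

open Set

lemma ConcaveOn.mul_le_apply_mul {g : ℝ → ℝ} (hg : ConcaveOn ℝ (Ici 0) g) (hg0 : g 0 = 0)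
    {u t : ℝ} (hu0 : 0 ≤ u) (hu1 : u ≤ 1) (ht : 0 ≤ t) : u * g t ≤ g (u * t) := by
  have h := hg.2 (mem_Ici.2 ht) self_mem_Ici hu0 (sub_nonneg.2 hu1) (add_sub_cancel u 1)
  simpa only [smul_eq_mul, mul_zero, add_zero, hg0] using h

lemma sq_mul_le_apply_mul_of_nonneg {f : ℝ → ℝ} (hf : Differentiable ℝ f) (h0 : f 0 = 0)
    (h0' : deriv f 0 = 0) (hconc : ConcaveOn ℝ (Ici 0) (deriv f))
    {u s : ℝ} (hu0 : 0 ≤ u) (hu1 : u ≤ 1) (hs : 0 ≤ s) : u ^ 2 * f s ≤ f (u * s) := by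
  set g : ℝ → ℝ := fun t => f (u * t) - u ^ 2 * f t
  have hg' : ∀ t, HasDerivAt g (deriv f (u * t) * u - u ^ 2 * deriv f t) t := fun t =>
    ((hf (u * t)).hasDerivAt.comp t ((hasDerivAt_id t).const_mul u |>.congr_deriv (mul_one u))).sub
      ((hf t).hasDerivAt.const_mul _)
  have hmono : MonotoneOn g (Ici 0) := by
    refine monotoneOn_of_deriv_nonneg (convex_Ici 0)
      (fun t _ => (hg' t).continuousAt.continuousWithinAt)
      (fun t _ => (hg' t).differentiableAt.differentiableWithinAt) fun t ht => ?_
    rw [interior_Ici] at ht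
    have hle := hconc.mul_le_apply_mul h0' hu0 hu1 (le_of_lt ht)
    rw [(hg' t).deriv]
    nlinarith
  have := hmono self_mem_Ici (mem_Ici.2 hs) hs
  simp only [g, mul_zero, h0, sub_zero] at this
  linarith

lemma sq_mul_le_apply_mul {f : ℝ → ℝ} (heven : Function.Even f) (hf : Differentiable ℝ f)
    (h0 : f 0 = 0) (h0' : deriv f 0 = 0) (hconc : ConcaveOn ℝ (Ici 0) (deriv f))
    {u : ℝ} (hu0 : 0 ≤ u) (hu1 : u ≤ 1) (s : ℝ) : u ^ 2 * f s ≤ f (u * s) := by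
  rcases le_total 0 s with hs | hs
  · exact sq_mul_le_apply_mul_of_nonneg hf h0 h0' hconc hu0 hu1 hs
  · have := sq_mul_le_apply_mul_of_nonneg hf h0 h0' hconc hu0 hu1 (neg_nonneg.2 hs)
    rwa [heven, mul_neg, heven] at this

section Conjugate

variable {α αstar : ℝ → ℝ} (hαstar : ∀ h, IsLUB {v | ∃ t, v = h * t - α t} (αstar h))
include hαstar

lemma conjugate_nonneg (h0 : α 0 = 0) (h : ℝ) : 0 ≤ αstar h :=
  (hαstar h).1 ⟨0, by rw [mul_zero, h0, sub_zero]⟩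

lemma conjugate_mul_le {u : ℝ} (hu : u ≠ 0) (hscale : ∀ s, u ^ 2 * α s ≤ α (u * s)) (v : ℝ) :
    αstar (v * u) ≤ u ^ 2 * αstar v := by
  refine (hαstar (v * u)).2 ?_
  rintro _ ⟨t, rfl⟩
  have hmem : v * (t / u) - α (t / u) ≤ αstar v := (hαstar v).1 ⟨t / u, rfl⟩
  have hα : u ^ 2 * α (t / u) ≤ α t := by simpa only [mul_div_cancel₀ t hu] using hscale (t / u)
  calc v * u * t - α t ≤ u ^ 2 * (v * (t / u) - α (t / u)) := by
        rw [mul_sub, show u ^ 2 * (v * (t / u)) = v * u * t by field_simp]; linarith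
    _ ≤ u ^ 2 * αstar v := mul_le_mul_of_nonneg_left hmem (sq_nonneg u)

end Conjugate

theorem omega_alpha_star_bound_general (α : ℝ → ℝ) (heven : ∀ t, α (-t) = α t)
    (hC1 : ContDiff ℝ 1 α) (h0 : α 0 = 0) (h0' : deriv α 0 = 0)
    (hconc : ConcaveOn ℝ (Set.Ici 0) (deriv α))
    (αstar : ℝ → ℝ)
    (hαstar : ∀ h : ℝ, IsLUB {v : ℝ | ∃ t : ℝ, v = h * t - α t} (αstar h)) :
    ∀ u ∈ Set.Ioo (0 : ℝ) 1,
      (⨆ v : {v : ℝ // 0 < v}, αstar ((v : ℝ) * u) / αstar (v : ℝ)) ≤ u ^ 2 := by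
  rintro u ⟨hu0, hu1⟩
  have hscale := sq_mul_le_apply_mul heven (hC1.differentiable one_ne_zero) h0 h0' hconc
    hu0.le hu1.le
  have : Nonempty {v : ℝ // 0 < v} := ⟨⟨1, one_pos⟩⟩
  refine ciSup_le fun v => ?_
  rcases (conjugate_nonneg hαstar h0 v).eq_or_lt with hzero | hpos
  · rw [← hzero, div_zero]
    positivity
  · exact (div_le_iff₀ hpos).2 (conjugate_mul_le hαstar hu0.ne' hscale v)

/-- Lemma 5.4 (iii): with `α*` the Legendre transform of `α` and
`ω_{α*}(x) = sup_{v>0} α*(vx)/α*(v)`, for any `u ∈ (0,1)` one has `ω_{α*}(u) ≤ u²`. -/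
theorem omega_alpha_star_bound (α : ℝ → ℝ) (hnn : ∀ t, 0 ≤ α t)
    (hconv : ConvexOn ℝ Set.univ α) (heven : ∀ t, α (-t) = α t)
    (hC1 : ContDiff ℝ 1 α) (h0 : α 0 = 0) (h0' : deriv α 0 = 0)
    (hconc : ConcaveOn ℝ (Set.Ici 0) (deriv α))
    (αstar : ℝ → ℝ)
    (hαstar : ∀ h : ℝ, IsLUB {v : ℝ | ∃ t : ℝ, v = h * t - α t} (αstar h)) :
    ∀ u ∈ Set.Ioo (0 : ℝ) 1,
      (⨆ v : {v : ℝ // 0 < v}, αstar ((v : ℝ) * u) / αstar (v : ℝ)) ≤ u ^ 2 :=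
  omega_alpha_star_bound_general α heven hC1 h0 h0' hconc αstar hαstar
end

section
/- Suppose a probability measure μ on ℝ^k satisfies: for all λ ∈ (0,1/C) and all bounded continuous f, Ent_μ(e^f) ≤ (1/(1−λC)) ∫ (f − Q^λ f) e^f dμ, where Q^λ f(x) = inf_y { f(y) + λ|x−y|²/2 } (inequality ICLSI(c,C) for quadratic cost). Then, applying this with εf for a smooth compactly supported f and letting ε → 0, μ satisfies the Poincaré inequality Var_μ(f) ≤ 4C ∫ |∇f|² dμ for all smooth compactly supported f. -/
open Real Set MeasureTheory
open scoped RealInnerProductSpace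

section Helpers

variable {k : ℕ}

lemma myIntegrable {μ : Measure (EuclideanSpace ℝ (Fin k))} [IsProbabilityMeasure μ]
    {f : EuclideanSpace ℝ (Fin k) → ℝ} (hf : Continuous f)
    {M : ℝ} (hM : ∀ x, |f x| ≤ M) : Integrable f μ :=
  ⟨hf.aestronglyMeasurable, HasFiniteIntegral.of_bounded (C := M) (ae_of_all _ fun x => by
    simpa using hM x)⟩

lemma myTaylor {f : EuclideanSpace ℝ (Fin k) → ℝ} {K : NNReal} (hd : Differentiable ℝ f)
    (hK : LipschitzWith K (fderiv ℝ f)) (x y : EuclideanSpace ℝ (Fin k)) :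
    f x + (fderiv ℝ f x) (y - x) - K * ‖y - x‖ ^ 2 ≤ f y := by
  set L := fderiv ℝ f x
  set φ : EuclideanSpace ℝ (Fin k) → ℝ := fun z => f z - L z with hφ
  have hdφ : ∀ z, DifferentiableAt ℝ φ z := fun z => (hd z).sub (L.differentiable z)
  have hfd : ∀ z, fderiv ℝ φ z = fderiv ℝ f z - L := by
    intro z
    rw [hφ]
    rw [fderiv_fun_sub (hd z) (L.differentiable z), L.fderiv]
  have key : ‖φ y - φ x‖ ≤ (K * ‖y - x‖) * ‖y - x‖ := by
    refine Convex.norm_image_sub_le_of_norm_fderiv_le (fun z _ => hdφ z) (fun z hz => ?_)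
      (convex_closedBall x ‖y - x‖) (Metric.mem_closedBall_self (norm_nonneg _))
      (by simp [Metric.mem_closedBall, dist_eq_norm])
    rw [hfd z]
    calc ‖fderiv ℝ f z - L‖ ≤ K * dist z x := by
          simpa [dist_eq_norm] using (hK.dist_le_mul z x)
    _ ≤ K * ‖y - x‖ := by
          exact mul_le_mul_of_nonneg_left (by simpa [Metric.mem_closedBall] using hz) K.2
  have : φ y - φ x = f y - f x - L (y - x) := by simp [hφ, map_sub]; ring
  rw [this] at key
  have key2 : |f y - f x - L (y - x)| ≤ K * ‖y - x‖ ^ 2 := by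
    rw [← Real.norm_eq_abs]
    calc ‖f y - f x - L (y - x)‖ ≤ ↑K * ‖y - x‖ * ‖y - x‖ := key
      _ = ↑K * ‖y - x‖ ^ 2 := by ring
  have := (abs_le.1 key2).1
  linarith

lemma expBound3 {t : ℝ} (ht : |t| ≤ 1) : |exp t - (1 + t + t ^ 2 / 2)| ≤ |t| ^ 3 := by
  have h := Real.exp_bound ht (n := 3) (by norm_num)
  have : ∑ m ∈ Finset.range 3, t ^ m / m.factorial = 1 + t + t ^ 2 / 2 := by
    norm_num [Finset.sum_range_succ, Nat.factorial]
  rw [this] at h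
  have h3 : (0:ℝ) ≤ |t| ^ 3 := by positivity
  calc |exp t - (1 + t + t ^ 2 / 2)| ≤ |t| ^ 3 * ((3:ℕ).succ / ((3:ℕ).factorial * 3)) := h
    _ ≤ |t| ^ 3 := by
        have : ((3:ℕ).succ / ((3:ℕ).factorial * 3) : ℝ) ≤ 1 := by norm_num [Nat.factorial]
        nlinarith

lemma expBound2 {t : ℝ} (ht : |t| ≤ 1) : |exp t - (1 + t)| ≤ t ^ 2 := by
  have h := Real.exp_bound ht (n := 2) (by norm_num)
  have : ∑ m ∈ Finset.range 2, t ^ m / m.factorial = 1 + t := by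
    norm_num [Finset.sum_range_succ, Nat.factorial]
  rw [this] at h
  calc |exp t - (1 + t)| ≤ |t| ^ 2 * ((2:ℕ).succ / ((2:ℕ).factorial * 2)) := h
    _ ≤ t ^ 2 := by
        rw [sq_abs]
        have : ((2:ℕ).succ / ((2:ℕ).factorial * 2) : ℝ) ≤ 1 := by norm_num [Nat.factorial]
        nlinarith [sq_nonneg t]

lemma mulExpLower {t : ℝ} (ht : |t| ≤ 1) : t + t ^ 2 - |t| ^ 3 ≤ t * exp t := by
  have h := expBound2 ht
  have : |t * exp t - (t + t ^ 2)| ≤ |t| ^ 3 := by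
    have : t * exp t - (t + t ^ 2) = t * (exp t - (1 + t)) := by ring
    rw [this, abs_mul]
    calc |t| * |exp t - (1 + t)| ≤ |t| * t ^ 2 := by
          exact mul_le_mul_of_nonneg_left h (abs_nonneg t)
      _ = |t| ^ 3 := by rw [← sq_abs]; ring
  linarith [neg_le_of_abs_le this]

lemma quadMin {a b r : ℝ} (hb : 0 < b) : -(a ^ 2 / (4 * b)) ≤ -a * r + b * r ^ 2 := by
  have this4 : (0:ℝ) < 4 * b := by linarith
  have key : -a * r + b * r ^ 2 + a ^ 2 / (4 * b) = (2 * b * r - a) ^ 2 / (4 * b) := by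
    field_simp; ring
  have := div_nonneg (sq_nonneg (2 * b * r - a)) this4.le
  linarith

end Helpers

/-- The entropy functional `Ent_μ(g) = ∫ g log g dμ - (∫ g dμ) log ∫ g dμ`. -/
noncomputable def ent {X : Type*} [MeasurableSpace X] (μ : Measure X) (g : X → ℝ) : ℝ :=
  (∫ x, g x * Real.log (g x) ∂μ)
    - (∫ x, g x ∂μ) * Real.log (∫ x, g x ∂μ)

set_option maxHeartbeats 3200000 in
/-- Section 6.3: linearization of the inf-convolution logarithmic Sobolev
inequality `ICLSI(c,C)` for the quadratic cost yields the Poincaré inequality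
`Var_μ(f) ≤ 4C ∫ |∇f|² dμ` for smooth compactly supported `f`. -/
theorem iclsi_implies_poincare {k : ℕ}
    (μ : Measure (EuclideanSpace ℝ (Fin k))) [IsProbabilityMeasure μ]
    (C : ℝ) (hC : 0 < C)
    (hICLSI : ∀ l : ℝ, 0 < l → l < 1 / C →
      ∀ f : EuclideanSpace ℝ (Fin k) → ℝ, Continuous f → (∃ M, ∀ x, |f x| ≤ M) →
        ent μ (fun x => Real.exp (f x))
          ≤ (1 / (1 - l * C))
              * ∫ x, (f x - ⨅ y, (f y + l * (‖x - y‖ ^ 2 / 2))) * Real.exp (f x) ∂μ) :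
    ∀ f : EuclideanSpace ℝ (Fin k) → ℝ, ContDiff ℝ (⊤ : ℕ∞) f → HasCompactSupport f →
      (∫ x, f x ^ 2 ∂μ) - (∫ x, f x ∂μ) ^ 2
        ≤ 4 * C * ∫ x, ‖gradient f x‖ ^ 2 ∂μ := by
  intro f hf hsupp
  have hfc : Continuous f := hf.continuous
  obtain ⟨M₀, hM₀⟩ := hsupp.exists_bound_of_continuous hfc
  have hM₀' : ∀ x, |f x| ≤ M₀ := fun x => by simpa [Real.norm_eq_abs] using hM₀ x
  set m₁ : ℝ := ∫ x, f x ∂μ with hm₁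
  set g : EuclideanSpace ℝ (Fin k) → ℝ := fun x => f x - m₁ with hgdef
  have hgc : Continuous g := hfc.sub continuous_const
  set M : ℝ := M₀ + |m₁| + 1 with hMdef
  have hM1 : 1 ≤ M := by
    have : 0 ≤ M₀ := le_trans (abs_nonneg _) (hM₀' 0)
    have := abs_nonneg m₁
    simp only [hMdef]; linarith
  have hM0 : 0 < M := lt_of_lt_of_le one_pos hM1
  have hgM : ∀ x, |g x| ≤ M := by
    intro x
    simp only [hgdef, hMdef]
    calc |f x - m₁| ≤ |f x| + |m₁| := abs_sub _ _
      _ ≤ M₀ + |m₁| + 1 := by linarith [hM₀' x]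
  -- integrability
  have hfint : Integrable f μ := myIntegrable hfc hM₀'
  have hgint : Integrable g μ := hfint.sub (integrable_const m₁)
  have hgzero : ∫ x, g x ∂μ = 0 := by
    simp only [hgdef]
    rw [integral_sub hfint (integrable_const _), integral_const]
    simp [hm₁]
  set m₂ : ℝ := ∫ x, g x ^ 2 ∂μ with hm₂
  have hg2int : Integrable (fun x => g x ^ 2) μ :=
    myIntegrable (hgc.pow 2) (M := M ^ 2) (fun x => by
      rw [abs_pow]
      exact pow_le_pow_left₀ (abs_nonneg _) (hgM x) 2)
  have hm₂0 : 0 ≤ m₂ := integral_nonneg (fun x => sq_nonneg _)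
  have hm₂le : m₂ ≤ M ^ 2 := by
    calc m₂ ≤ ∫ _, M ^ 2 ∂μ := by
          refine integral_mono hg2int (integrable_const _) (fun x => ?_)
          calc g x ^ 2 = |g x| ^ 2 := (sq_abs _).symm
            _ ≤ M ^ 2 := pow_le_pow_left₀ (abs_nonneg _) (hgM x) 2
      _ = M ^ 2 := by simp
  have hg3int : Integrable (fun x => |g x| ^ 3) μ :=
    myIntegrable (hgc.abs.pow 3) (M := M ^ 3) (fun x => by
      rw [abs_pow, abs_abs]
      exact pow_le_pow_left₀ (abs_nonneg _) (hgM x) 3)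
  have hg3le : ∫ x, |g x| ^ 3 ∂μ ≤ M ^ 3 := by
    calc (∫ x, |g x| ^ 3 ∂μ) ≤ ∫ _, M ^ 3 ∂μ := by
          refine integral_mono hg3int (integrable_const _) (fun x => ?_)
          exact pow_le_pow_left₀ (abs_nonneg _) (hgM x) 3
      _ = M ^ 3 := by simp
  -- gradient facts
  have hgradnorm : ∀ x, ‖gradient f x‖ = ‖fderiv ℝ f x‖ := fun x => by
    simp [gradient, LinearIsometryEquiv.norm_map]
  set G : EuclideanSpace ℝ (Fin k) → ℝ := fun x => ‖gradient f x‖ ^ 2 with hGdef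
  have hfderivc : Continuous (fderiv ℝ f) := hf.continuous_fderiv (by simp)
  have hGc : Continuous G := by
    have : Continuous (gradient f) :=
      (InnerProductSpace.toDual ℝ (EuclideanSpace ℝ (Fin k))).symm.continuous.comp hfderivc
    exact (this.norm.pow 2)
  obtain ⟨MG, hMG⟩ := (hsupp.fderiv ℝ).exists_bound_of_continuous hfderivc
  have hMG0 : 0 ≤ MG := le_trans (norm_nonneg _) (hMG 0)
  have hGint : Integrable G μ :=
    myIntegrable hGc (M := MG ^ 2) (fun x => by
      rw [hGdef]
      rw [abs_pow, abs_norm, hgradnorm x]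
      exact pow_le_pow_left₀ (norm_nonneg _) (hMG x) 2)
  set IG : ℝ := ∫ x, G x ∂μ with hIG
  have hIG0 : 0 ≤ IG := integral_nonneg (fun x => sq_nonneg _)
  -- Lipschitz constant of the derivative
  obtain ⟨K, hK⟩ := ContDiff.lipschitzWith_of_hasCompactSupport (hsupp.fderiv ℝ)
    (hf.fderiv_right (m := 1) (by norm_cast)) (by simp)
  set Kr : ℝ := (K : ℝ) with hKr
  have hKr0 : 0 ≤ Kr := K.2
  -- the parameter l
  set l : ℝ := 1 / (2 * C) with hldef
  have hl0 : 0 < l := by positivity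
  have hlC : l < 1 / C := by
    rw [hldef, div_lt_div_iff₀ (by positivity) hC]
    nlinarith
  have hlC2 : 1 - l * C = 1 / 2 := by
    rw [hldef]; field_simp; ring
  set D : ℝ := 2 * M ^ 3 + (M ^ 2 / 2 + M ^ 3) ^ 2 with hD
  have hD0 : 0 ≤ D := by positivity
  set ε₀ : ℝ := min (1 / (M + 1)) (l / (2 * (Kr + 1))) with hε₀def
  have hε₀pos : 0 < ε₀ := by
    apply lt_min
    · positivity
    · positivity
  have hG0 : ∀ x, 0 ≤ G x := fun x => by rw [hGdef]; exact sq_nonneg _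
  clear_value m₁ g M m₂ G IG Kr l D ε₀
  -- main estimate
  have main : ∀ ε : ℝ, 0 < ε → ε < ε₀ →
      m₂ / 2 ≤ ε * D + exp (ε * M) / (2 * (l / 2 - ε * Kr)) * IG := by
    intro ε hε hεlt
    have hεM1 : ε * M ≤ 1 := by
      have h1 : ε < 1 / (M + 1) := by
        rw [hε₀def] at hεlt
        exact lt_of_lt_of_le hεlt (min_le_left _ _)
      have hM1' : (0:ℝ) < M + 1 := by linarith
      rw [lt_div_iff₀ hM1'] at h1
      have he : ε * (M + 1) = ε * M + ε := by ring
      linarith only [h1, he, hε]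
    have hε1 : ε ≤ 1 := by
      have h9 : ε * 1 ≤ ε * M := mul_le_mul_of_nonneg_left hM1 hε.le
      rw [mul_one] at h9
      linarith only [h9, hεM1]
    set b : ℝ := l / 2 - ε * Kr with hbdefn
    have hbpos : 0 < b := by
      have h2 : ε < l / (2 * (Kr + 1)) := by
        have h := lt_of_lt_of_le hεlt (le_of_eq hε₀def)
        exact lt_of_lt_of_le h (min_le_right _ _)
      have hKp : (0:ℝ) < 2 * (Kr + 1) := by linarith
      rw [lt_div_iff₀ hKp] at h2
      rw [hbdefn]
      have he : ε * (2 * (Kr + 1)) = 2 * (ε * Kr) + 2 * ε := by ring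
      linarith only [h2, he, hε]
    clear_value b
    have hεgbound : ∀ x, |ε * g x| ≤ ε * M := fun x => by
      rw [abs_mul, abs_of_pos hε]
      exact mul_le_mul_of_nonneg_left (hgM x) hε.le
    have htle : ∀ x, |ε * g x| ≤ 1 := fun x => le_trans (hεgbound x) hεM1
    have hεgc : Continuous (fun x => ε * g x) := continuous_const.mul hgc
    have hexpc : Continuous (fun x => exp (ε * g x)) := Real.continuous_exp.comp hεgc
    have hexpbdd : ∀ x, |exp (ε * g x)| ≤ exp 1 := fun x => by
      rw [abs_of_pos (exp_pos _)]
      exact exp_le_exp.2 (le_trans (le_abs_self _) (htle x))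
    have hexpint : Integrable (fun x => exp (ε * g x)) μ := myIntegrable hexpc hexpbdd
    have hgeint : Integrable (fun x => (ε * g x) * exp (ε * g x)) μ :=
      myIntegrable (hεgc.mul hexpc) (M := exp 1) (fun x => by
        rw [abs_mul]
        calc |ε * g x| * |exp (ε * g x)| ≤ 1 * exp 1 :=
              mul_le_mul (htle x) (hexpbdd x) (abs_nonneg _) zero_le_one
          _ = exp 1 := one_mul _)
    set A : ℝ := ∫ x, exp (ε * g x) ∂μ with hA
    have hA1 : exp (-1) ≤ A := by
      have : (∫ _, exp (-1:ℝ) ∂μ) ≤ A := by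
        refine integral_mono (integrable_const _) hexpint (fun x => ?_)
        exact exp_le_exp.2 (by linarith [(abs_le.1 (htle x)).1])
      simpa using this
    have hApos : 0 < A := lt_of_lt_of_le (exp_pos _) hA1
    clear_value A
    -- lower bound for ∫ (εg) e^{εg}
    have hI1 : ε^2 * m₂ - ε^3 * M^3 ≤ ∫ x, (ε * g x) * exp (ε * g x) ∂μ := by
      have hadd : Integrable (fun x => ε * g x + ε^2 * g x^2) μ := by
        exact (hgint.const_mul ε).add (hg2int.const_mul (ε^2))
      have hlhsint : Integrable (fun x => ε * g x + ε^2 * g x^2 - ε^3 * |g x|^3) μ := by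
        exact hadd.sub (hg3int.const_mul (ε^3))
      have hmono : (∫ x, (ε * g x + ε^2 * g x^2 - ε^3 * |g x|^3) ∂μ)
          ≤ ∫ x, (ε * g x) * exp (ε * g x) ∂μ := by
        refine integral_mono hlhsint hgeint (fun x => ?_)
        have h := mulExpLower (htle x)
        have e2 : (ε * g x)^2 = ε^2 * g x^2 := by ring
        have e3 : |ε * g x|^3 = ε^3 * |g x|^3 := by
          rw [abs_mul, abs_of_pos hε]; ring
        rw [e2, e3] at h
        exact h
      have hcalc : (∫ x, (ε * g x + ε^2 * g x^2 - ε^3 * |g x|^3) ∂μ)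
          = ε^2 * m₂ - ε^3 * ∫ x, |g x|^3 ∂μ := by
        rw [integral_sub hadd (hg3int.const_mul (ε^3)),
          integral_add (hgint.const_mul ε) (hg2int.const_mul (ε^2)),
          integral_const_mul, integral_const_mul, integral_const_mul, hgzero, ← hm₂]
        ring
      have h3 : ε^3 * (∫ x, |g x|^3 ∂μ) ≤ ε^3 * M^3 :=
        mul_le_mul_of_nonneg_left hg3le (by positivity)
      rw [hcalc] at hmono
      linarith
    -- second order expansion of A
    have hI2 : |A - 1 - ε^2 * m₂ / 2| ≤ ε^3 * M^3 := by
      have hs1 : Integrable (fun x => exp (ε * g x) - 1) μ := hexpint.sub (integrable_const 1)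
      have hs2 : Integrable (fun x => exp (ε * g x) - 1 - ε * g x) μ :=
        hs1.sub (hgint.const_mul ε)
      have hrint : Integrable (fun x => exp (ε * g x) - 1 - ε * g x - ε^2 * g x^2 / 2) μ := by
        have := hs2.sub ((hg2int.const_mul (ε^2)).div_const 2)
        refine this.congr (ae_of_all _ fun x => ?_)
        simp only [Pi.sub_apply]
      have hrepr : A - 1 - ε^2 * m₂ / 2
          = ∫ x, (exp (ε * g x) - 1 - ε * g x - ε^2 * g x^2 / 2) ∂μ := by
        rw [integral_sub hs2 ((hg2int.const_mul (ε^2)).div_const 2),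
          integral_sub hs1 (hgint.const_mul ε),
          integral_sub hexpint (integrable_const 1),
          integral_div, integral_const_mul, integral_const_mul, hgzero, integral_const, ← hm₂]
        simp [hA]
      rw [hrepr]
      have habs : |∫ x, (exp (ε * g x) - 1 - ε * g x - ε^2 * g x^2 / 2) ∂μ|
          ≤ ∫ x, |exp (ε * g x) - 1 - ε * g x - ε^2 * g x^2 / 2| ∂μ := by
        exact
          norm_integral_le_integral_norm (μ := μ) (fun x => exp (ε * g x) - 1 - ε * g x - ε^2 * g x^2 / 2)
      refine habs.trans ?_
      have hptw : ∀ x, |exp (ε * g x) - 1 - ε * g x - ε^2 * g x^2 / 2| ≤ ε^3 * |g x|^3 := by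
        intro x
        have e1 : exp (ε * g x) - 1 - ε * g x - ε^2 * g x^2 / 2
            = exp (ε * g x) - (1 + ε * g x + (ε * g x)^2 / 2) := by ring
        rw [e1]
        have := expBound3 (htle x)
        have e3 : |ε * g x|^3 = ε^3 * |g x|^3 := by
          rw [abs_mul, abs_of_pos hε]; ring
        rw [e3] at this
        exact this
      calc (∫ x, |exp (ε * g x) - 1 - ε * g x - ε^2 * g x^2 / 2| ∂μ)
          ≤ ∫ x, ε^3 * |g x|^3 ∂μ :=
            integral_mono hrint.abs (hg3int.const_mul (ε^3)) hptw
        _ = ε^3 * ∫ x, |g x|^3 ∂μ := integral_const_mul _ _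
        _ ≤ ε^3 * M^3 := mul_le_mul_of_nonneg_left hg3le (by positivity)
    -- entropy lower bound
    have hub : A - 1 ≤ ε^2 * m₂ / 2 + ε^3 * M^3 := by
      have := (abs_le.1 hI2).2; linarith
    have hε32 : ε^3 ≤ ε^2 := pow_le_pow_of_le_one hε.le hε1 (by norm_num)
    have hab : |A - 1| ≤ ε^2 * (M^2 / 2 + M^3) := by
      have h1 := (abs_le.1 hI2).1
      have h2 := (abs_le.1 hI2).2
      have h3 : ε^3 * M^3 ≤ ε^2 * M^3 :=
        mul_le_mul_of_nonneg_right hε32 (by positivity)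
      have h4 : ε^2 * m₂ ≤ ε^2 * M^2 :=
        mul_le_mul_of_nonneg_left hm₂le (sq_nonneg ε)
      have h5 : 0 ≤ ε^2 * m₂ := mul_nonneg (sq_nonneg ε) hm₂0
      have h6 : 0 ≤ ε^2 * M^2 := mul_nonneg (sq_nonneg ε) (sq_nonneg M)
      rw [abs_le]
      constructor
      · linarith only [h1, h3, h5, h6]
      · linarith only [h2, h3, h4]
    have husq : (A - 1)^2 ≤ ε^3 * (M^2 / 2 + M^3)^2 := by
      have h1 : (A - 1)^2 ≤ (ε^2 * (M^2/2 + M^3))^2 := by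
        rw [← sq_abs]
        exact pow_le_pow_left₀ (abs_nonneg _) hab 2
      have h2 : (ε^2 * (M^2/2 + M^3))^2 = ε^4 * (M^2/2 + M^3)^2 := by ring
      have h3 : ε^4 * (M^2/2 + M^3)^2 ≤ ε^3 * (M^2/2 + M^3)^2 :=
        mul_le_mul_of_nonneg_right (pow_le_pow_of_le_one hε.le hε1 (by norm_num)) (by positivity)
      linarith only [h1, h2, h3]
    have hAlogA : A * Real.log A ≤ (A - 1) + (A - 1)^2 := by
      have hlog : Real.log A ≤ A - 1 := Real.log_le_sub_one_of_pos hApos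
      calc A * Real.log A ≤ A * (A - 1) := mul_le_mul_of_nonneg_left hlog hApos.le
        _ = (A - 1) + (A - 1)^2 := by ring
    have hentformula : ent μ (fun x => Real.exp (ε * g x))
        = (∫ x, (ε * g x) * exp (ε * g x) ∂μ) - A * Real.log A := by
      simp only [ent]
      rw [← hA]
      congr 1
      refine integral_congr_ae (ae_of_all _ fun x => ?_)
      simp only [Real.log_exp]
      ring
    have hD3 : ε^3 * D = 2 * (ε^3 * M^3) + ε^3 * (M^2/2 + M^3)^2 := by
      rw [hD]; ring
    have hEntLB : ε^2 * (m₂ / 2) - ε^3 * D ≤ ent μ (fun x => Real.exp (ε * g x)) := by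
      rw [hentformula]
      have e0 : ε^2 * (m₂/2) = ε^2 * m₂ / 2 := by ring
      linarith only [hI1, hAlogA, hub, husq, hD3, e0]
    -- apply ICLSI
    have hco : (1:ℝ) / (1 - l * C) = 2 := by rw [hlC2]; norm_num
    have hiclsi' : ent μ (fun x => Real.exp (ε * g x))
        ≤ 2 * ∫ x, ((ε * g x) - ⨅ y, (ε * g y + l * (‖x - y‖ ^ 2 / 2))) * Real.exp (ε * g x) ∂μ := by
      have h := hICLSI l hl0 hlC (fun x => ε * g x) hεgc ⟨ε * M, hεgbound⟩
      rw [hco] at h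
      exact h
    -- bounds on the inf-convolution
    have hbddQ : ∀ x : EuclideanSpace ℝ (Fin k),
        BddBelow (Set.range fun y => ε * g y + l * (‖x - y‖ ^ 2 / 2)) := by
      intro x
      refine ⟨-(ε * M), ?_⟩
      rintro t ⟨y, rfl⟩
      have h1 : -(ε * M) ≤ ε * g y := by linarith [(abs_le.1 (hεgbound y)).1]
      have h2 : 0 ≤ l * (‖x - y‖ ^ 2 / 2) := mul_nonneg hl0.le (by positivity)
      simp only []
      linarith only [h1, h2]
    have hQle : ∀ x, (⨅ y, (ε * g y + l * (‖x - y‖ ^ 2 / 2))) ≤ ε * g x := by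
      intro x
      have := ciInf_le (hbddQ x) x
      simpa using this
    have hQge : ∀ x, ε * g x - ε^2 * G x / (4 * b)
        ≤ ⨅ y, (ε * g y + l * (‖x - y‖ ^ 2 / 2)) := by
      intro x
      refine le_ciInf (fun y => ?_)
      have htay := myTaylor (hf.differentiable (by simp)) hK x y
      have hgy : g x + (fderiv ℝ f x) (y - x) - Kr * ‖y - x‖ ^ 2 ≤ g y := by
        simp only [hgdef]
        rw [hKr]
        linarith
      have hop : -(‖fderiv ℝ f x‖ * ‖y - x‖) ≤ (fderiv ℝ f x) (y - x) := by
        have h := (fderiv ℝ f x).le_opNorm (y - x)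
        rw [Real.norm_eq_abs] at h
        linarith [(abs_le.1 h).1]
      have h1 : ε * g x + ε * ((fderiv ℝ f x) (y - x)) - (ε * Kr) * ‖y - x‖ ^ 2 ≤ ε * g y := by
        have h0 := mul_le_mul_of_nonneg_left hgy hε.le
        linarith only [h0]
      have h2 : -(ε * ‖fderiv ℝ f x‖ * ‖y - x‖) ≤ ε * ((fderiv ℝ f x) (y - x)) := by
        have h0 := mul_le_mul_of_nonneg_left hop hε.le
        linarith only [h0]
      have h3 : -((ε * ‖fderiv ℝ f x‖)^2 / (4 * b))
          ≤ -(ε * ‖fderiv ℝ f x‖) * ‖y - x‖ + b * ‖y - x‖ ^ 2 := quadMin hbpos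
      have h4 : l * (‖x - y‖ ^ 2 / 2) = b * ‖y - x‖ ^ 2 + (ε * Kr) * ‖y - x‖ ^ 2 := by
        rw [norm_sub_rev x y, hbdefn]; ring
      have h5 : (ε * ‖fderiv ℝ f x‖)^2 = ε^2 * G x := by
        simp only [hGdef]
        rw [hgradnorm x]; ring
      have h6 : ε^2 * G x / (4 * b) = (ε * ‖fderiv ℝ f x‖)^2 / (4 * b) := by rw [h5]
      rw [h6]
      linarith only [h1, h2, h3, h4]
    -- upper bound for the integral
    have hintUB : (∫ x, ((ε * g x) - ⨅ y, (ε * g y + l * (‖x - y‖ ^ 2 / 2))) * Real.exp (ε * g x) ∂μ)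
        ≤ ε^2 * exp (ε * M) / (4 * b) * IG := by
      have hbd : Integrable (fun x => ε^2 * exp (ε * M) / (4 * b) * G x) μ := hGint.const_mul _
      have hstep : (∫ x, ((ε * g x) - ⨅ y, (ε * g y + l * (‖x - y‖ ^ 2 / 2))) * Real.exp (ε * g x) ∂μ)
          ≤ ∫ x, ε^2 * exp (ε * M) / (4 * b) * G x ∂μ := by
        refine integral_mono_of_nonneg (ae_of_all _ fun x => ?_) hbd (ae_of_all _ fun x => ?_)
        · exact mul_nonneg (sub_nonneg.2 (hQle x)) (exp_pos _).le
        · have ha1 : (ε * g x) - (⨅ y, (ε * g y + l * (‖x - y‖ ^ 2 / 2))) ≤ ε^2 * G x / (4 * b) := by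
            linarith [hQge x]
          have ha2 : Real.exp (ε * g x) ≤ exp (ε * M) :=
            exp_le_exp.2 (le_trans (le_abs_self _) (hεgbound x))
          have ha3 : 0 ≤ (ε * g x) - ⨅ y, (ε * g y + l * (‖x - y‖ ^ 2 / 2)) :=
            sub_nonneg.2 (hQle x)
          calc ((ε * g x) - ⨅ y, (ε * g y + l * (‖x - y‖ ^ 2 / 2))) * Real.exp (ε * g x)
              ≤ (ε^2 * G x / (4 * b)) * exp (ε * M) :=
                mul_le_mul ha1 ha2 (exp_pos _).le
                  (div_nonneg (mul_nonneg (sq_nonneg ε) (hG0 x)) (by linarith [hbpos]))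
            _ = ε^2 * exp (ε * M) / (4 * b) * G x := by ring
      calc (∫ x, ((ε * g x) - ⨅ y, (ε * g y + l * (‖x - y‖ ^ 2 / 2))) * Real.exp (ε * g x) ∂μ)
          ≤ ∫ x, ε^2 * exp (ε * M) / (4 * b) * G x ∂μ := hstep
        _ = ε^2 * exp (ε * M) / (4 * b) * IG := by rw [integral_const_mul, hIG]
    -- combine and divide by ε²
    have hchain : ε^2 * (m₂ / 2) - ε^3 * D ≤ 2 * (ε^2 * exp (ε * M) / (4 * b) * IG) :=
      le_trans hEntLB (le_trans hiclsi' (mul_le_mul_of_nonneg_left hintUB (by norm_num)))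
    have hr : 2 * (ε^2 * exp (ε * M) / (4 * b) * IG) = ε^2 * (exp (ε * M) / (2 * b) * IG) := by
      have hb0 : b ≠ 0 := ne_of_gt hbpos
      field_simp
      ring
    have hdiv : m₂ / 2 ≤ ε * D + exp (ε * M) / (2 * b) * IG := by
      have h7 : ε^2 * (m₂ / 2) ≤ ε^2 * (ε * D + exp (ε * M) / (2 * b) * IG) := by
        have h8 : ε^2 * (ε * D) = ε^3 * D := by ring
        linarith only [hchain, hr, h8]
      exact le_of_mul_le_mul_left h7 (by positivity)
    exact hdiv
  -- taking the limit ε → 0⁺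
  have hlim : Filter.Tendsto (fun ε : ℝ => ε * D + exp (ε * M) / (2 * (l / 2 - ε * Kr)) * IG)
      (nhdsWithin 0 (Set.Ioi 0)) (nhds (0 * D + exp (0 * M) / (2 * (l / 2 - 0 * Kr)) * IG)) := by
    apply Filter.Tendsto.mono_left _ nhdsWithin_le_nhds
    apply ContinuousAt.tendsto
    apply ContinuousAt.add
    · exact (continuous_id.mul continuous_const).continuousAt
    · apply ContinuousAt.mul _ continuousAt_const
      apply ContinuousAt.div
      · exact (Real.continuous_exp.comp (continuous_id.mul continuous_const)).continuousAt
      · exact (continuous_const.mul (continuous_const.sub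
          (continuous_id.mul continuous_const))).continuousAt
      · simp [hl0.ne']
  have hm2half : m₂ / 2 ≤ 0 * D + exp (0 * M) / (2 * (l / 2 - 0 * Kr)) * IG := by
    refine ge_of_tendsto hlim ?_
    filter_upwards [Ioo_mem_nhdsGT hε₀pos] with ε hεIoo
    exact main ε hεIoo.1 hεIoo.2
  have hm2 : m₂ ≤ 4 * C * IG := by
    have hsimp : 0 * D + rexp (0 * M) / (2 * (l / 2 - 0 * Kr)) * IG = 2 * C * IG := by
      have h0 : (0:ℝ) * M = 0 := by ring
      rw [h0, Real.exp_zero, hldef]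
      have hC' : C ≠ 0 := ne_of_gt hC
      field_simp; ring
    rw [hsimp] at hm2half
    linarith
  -- conclude
  have hf2int : Integrable (fun x => f x ^ 2) μ :=
    myIntegrable (hfc.pow 2) (M := M₀ ^ 2) (fun x => by
      rw [abs_pow]
      exact pow_le_pow_left₀ (abs_nonneg _) (hM₀' x) 2)
  have hexp : m₂ = (∫ x, f x ^ 2 ∂μ) - m₁ ^ 2 := by
    have h1 : ∀ x, g x ^ 2 = f x ^ 2 - (2 * m₁) * f x + m₁ ^ 2 := by
      intro x; simp only [hgdef]; ring
    rw [hm₂]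
    rw [integral_congr_ae (ae_of_all _ h1)]
    have hsubint : Integrable (fun x => f x ^ 2 - 2 * m₁ * f x) μ := by
      exact hf2int.sub (hfint.const_mul (2 * m₁))
    rw [integral_add hsubint (integrable_const _),
      integral_sub hf2int (hfint.const_mul (2 * m₁)), integral_const_mul, integral_const]
    simp only [measure_univ, ENNReal.toReal_one, probReal_univ, smul_eq_mul, one_mul, ← hm₁]
    ring
  linarith
end
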